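/- arXiv:2404.03644 — 6 statements merged into one kernel-verified Lean document; each statement's English description precedes it below -/
import Mathlib

section
/- Let A be an M×N complex matrix and λ > 0. Then for every t ∈ ℝ and every ψ ∈ ℂ^N, the matrix exponential satisfies exp(−it·H_SGA²)·(ψ, 0) = (exp(−it·λA†A)·ψ, 0), where (ψ, 0) ∈ ℂ^{N+M} denotes ψ with M zero coordinates appended. -/
open Matrix NormedSpace

theorem HasSum.matrix_fromBlocks {X l m n o R : Type*} [AddCommMonoid R] [TopologicalSpace R]
    {L : SummationFilter X}
    {fA : X → Matrix n l R} {fB : X → Matrix n m R} {fC : X → Matrix o l R} {fD : X → Matrix o m R}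
    {A : Matrix n l R} {B : Matrix n m R} {C : Matrix o l R} {D : Matrix o m R}
    (hA : HasSum fA A L) (hB : HasSum fB B L) (hC : HasSum fC C L) (hD : HasSum fD D L) :
    HasSum (fun x => fromBlocks (fA x) (fB x) (fC x) (fD x)) (fromBlocks A B C D) L := by
  refine Pi.hasSum.mpr fun i => Pi.hasSum.mpr fun j => ?_
  rcases i with i | i <;> rcases j with j | j
  · exact Pi.hasSum.mp (Pi.hasSum.mp hA i) j
  · exact Pi.hasSum.mp (Pi.hasSum.mp hB i) j
  · exact Pi.hasSum.mp (Pi.hasSum.mp hC i) j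
  · exact Pi.hasSum.mp (Pi.hasSum.mp hD i) j

namespace Matrix

theorem fromBlocks_zero₁₁_zero₂₂_sq {m n α : Type*} [Fintype m] [Fintype n] [DecidableEq m]
    [DecidableEq n] [Semiring α] (B : Matrix m n α) (C : Matrix n m α) :
    fromBlocks 0 B C 0 ^ 2 = fromBlocks (B * C) 0 0 (C * B) := by
  simp [sq, fromBlocks_multiply]

variable {m n 𝔸 : Type*} [Fintype m] [DecidableEq m] [Fintype n] [DecidableEq n]
  [NormedRing 𝔸] [NormedAlgebra ℚ 𝔸] [CompleteSpace 𝔸]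

/- The operator norm makes `Matrix m m 𝔸` a complete normed `ℚ`-algebra; its uniformity is the
product one, but only up to unfolding, so the completeness instance has to be passed by hand. -/
open scoped Norms.Operator in
theorem exp_series_hasSum_exp (A : Matrix m m 𝔸) :
    HasSum (fun k => (k.factorial⁻¹ : ℚ) • A ^ k) (exp A) :=
  @exp_series_hasSum_exp' ℚ (Matrix m m 𝔸) _ _ _ _ _
    (inferInstance : CompleteSpace (m → m → 𝔸)) A

theorem exp_fromBlocks_diagonal (A : Matrix m m 𝔸) (D : Matrix n n 𝔸) :
    exp (fromBlocks A 0 0 D) = fromBlocks (exp A) 0 0 (exp D) := by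
  refine (exp_series_hasSum_exp _).unique ?_
  simp only [fromBlocks_diagonal_pow, fromBlocks_smul, smul_zero]
  exact (exp_series_hasSum_exp A).matrix_fromBlocks hasSum_zero hasSum_zero
    (exp_series_hasSum_exp D)

end Matrix

/-- For an `M × N` complex matrix `A` and `λ > 0`, for every `t ∈ ℝ` and
`ψ ∈ ℂ^N`, the matrix exponential satisfies
`exp(−it·H_SGA²)·(ψ, 0) = (exp(−it·λAᴴA)·ψ, 0)`, where `(ψ, 0) ∈ ℂ^{N+M}` denotes `ψ`
with `M` zero coordinates appended. -/
theorem sga_sq_exp_action (M N : ℕ) (A : Matrix (Fin M) (Fin N) ℂ) (lam : ℝ)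
    (hlam : 0 < lam) (t : ℝ) (ψ : Fin N → ℂ) :
    let HSGA : Matrix (Fin N ⊕ Fin M) (Fin N ⊕ Fin M) ℂ :=
      (Real.sqrt lam : ℂ) • Matrix.fromBlocks 0 Aᴴ A 0
    (NormedSpace.exp ((-(Complex.I) * (t : ℂ)) • (HSGA ^ 2))) *ᵥ Sum.elim ψ 0 =
      Sum.elim ((NormedSpace.exp ((-(Complex.I) * (t : ℂ)) • ((lam : ℂ) • (Aᴴ * A)))) *ᵥ ψ) 0 := by
  intro HSGA
  have hsq : HSGA ^ 2 = fromBlocks ((lam : ℂ) • (Aᴴ * A)) 0 0 ((lam : ℂ) • (A * Aᴴ)) := by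
    rw [smul_pow, fromBlocks_zero₁₁_zero₂₂_sq, ← Complex.ofReal_pow, Real.sq_sqrt hlam.le]
    simp only [fromBlocks_smul, smul_zero]
  simp only [hsq, fromBlocks_smul, smul_zero]
  rw [exp_fromBlocks_diagonal, fromBlocks_mulVec]
  simp
end

section
/- There exists a universal constant C > 0 such that for every t ∈ ℝ and every ε ∈ (0, 2/e), there exist polynomials P_cos and P_sin with real coefficients of degree at most C·(|t| + log(1/ε)) satisfying sup_{x ∈ [−1,1]} |P_cos(x)| ≤ 1, sup_{x ∈ [−1,1]} |P_sin(x)| ≤ 1, sup_{x ∈ [−1,1]} |cos(tx) − P_cos(x)| ≤ ε, and sup_{x ∈ [−1,1]} |sin(tx) − P_sin(x)| ≤ ε. -/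
/-!
The degree `< N` Taylor polynomial of `z ↦ exp z` approximates `exp (i t x)` on `[-1, 1]` with error
at most `2 e^{2|t|} / 2^N` (since `(2|t|)^N / N! ≤ e^{2|t|}`), and its real and imaginary
parts are real polynomials approximating `cos (t x)` and `sin (t x)`. Taking
`N ≈ 4|t| + 2 log (1/ε)` makes the error `≤ ε/4`; multiplying by `1 - ε/2` then pushes the
approximant into `[-1, 1]` while keeping the error below `ε`. For `ε < 2/e` we have
`log (1/ε) ≥ 1/4`, which absorbs the additive constant in the degree.
-/

open Polynomial Finset Set
open scoped Nat

lemma Real.exp_le_two_pow {a : ℝ} {N : ℕ} (h : 2 * a ≤ N) : Real.exp a ≤ 2 ^ N :=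
  calc Real.exp a ≤ Real.exp (N * Real.log 2) :=
        Real.exp_le_exp.2 (by nlinarith [Real.log_two_gt_d9, (Nat.cast_nonneg N : (0 : ℝ) ≤ N)])
    _ = 2 ^ N := by rw [Real.exp_nat_mul, Real.exp_log two_pos]

lemma Complex.norm_exp_sub_sum_range_le {z : ℂ} {r : ℝ} {N : ℕ} (hz : ‖z‖ ≤ r)
    (hN : 2 * r ≤ N + 1) :
    ‖Complex.exp z - ∑ k ∈ range N, z ^ k / k.factorial‖ ≤ 2 * Real.exp (2 * r) / 2 ^ N := by
  have hr : 0 ≤ r := (norm_nonneg z).trans hz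
  calc ‖Complex.exp z - ∑ k ∈ range N, z ^ k / k.factorial‖ ≤ ‖z‖ ^ N / N ! * 2 :=
        Complex.exp_bound' (by rw [div_le_iff₀ (by positivity)]; push_cast; linarith)
    _ ≤ r ^ N / N ! * 2 := by gcongr
    _ = 2 * ((2 * r) ^ N / N !) / 2 ^ N := by rw [mul_pow]; field_simp
    _ ≤ 2 * Real.exp (2 * r) / 2 ^ N := by
        gcongr; exact Real.pow_div_factorial_le_exp _ (by positivity) N

lemma abs_one_sub_half_mul_le_of_abs_sub_le {a b ε : ℝ} (hε : 0 ≤ ε) (hε2 : ε ≤ 2)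
    (ha : |a| ≤ 1) (hab : |a - b| ≤ ε / 4) :
    |(1 - ε / 2) * b| ≤ 1 ∧ |a - (1 - ε / 2) * b| ≤ ε := by
  have hb : |b| ≤ 1 + ε / 4 := by linarith [abs_sub_abs_le_abs_sub b a, abs_sub_comm a b]
  constructor
  · rw [abs_mul, abs_of_nonneg (by linarith)]
    nlinarith [abs_nonneg b]
  · calc |a - (1 - ε / 2) * b| = |(a - b) + ε / 2 * b| := by congr 1; ring
      _ ≤ |a - b| + |ε / 2 * b| := abs_add_le _ _
      _ = |a - b| + ε / 2 * |b| := by rw [abs_mul, abs_of_nonneg (by positivity : (0 : ℝ) ≤ ε / 2)]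
      _ ≤ ε := by nlinarith

lemma exists_abs_eval_le_one_of_approx {s : Set ℝ} {g : ℝ → ℝ} {Q : ℝ[X]} {ε : ℝ} (hε : 0 ≤ ε)
    (hε2 : ε ≤ 2) (hg : ∀ x ∈ s, |g x| ≤ 1) (hQ : ∀ x ∈ s, |g x - Q.eval x| ≤ ε / 4) :
    ∃ P : ℝ[X], P.natDegree ≤ Q.natDegree ∧ (∀ x ∈ s, |P.eval x| ≤ 1) ∧
      ∀ x ∈ s, |g x - P.eval x| ≤ ε := by
  refine ⟨C (1 - ε / 2) * Q, natDegree_C_mul_le _ _, fun x hx => ?_, fun x hx => ?_⟩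
  · simpa using (abs_one_sub_half_mul_le_of_abs_sub_le hε hε2 (hg x hx) (hQ x hx)).1
  · simpa using (abs_one_sub_half_mul_le_of_abs_sub_le hε hε2 (hg x hx) (hQ x hx)).2

-- With `f = re` (resp. `im`) this is the Taylor polynomial of degree `< N` of `cos (t x)`
-- (resp. `sin (t x)`).
noncomputable def trigTaylor (f : ℂ →ₗ[ℝ] ℝ) (t : ℝ) (N : ℕ) : ℝ[X] :=
  ∑ k ∈ range N, C (f ((t * Complex.I) ^ k / k !)) * X ^ k

section trigTaylor

variable (f : ℂ →ₗ[ℝ] ℝ) (t : ℝ) (N : ℕ)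

lemma natDegree_trigTaylor_le : (trigTaylor f t N).natDegree ≤ N :=
  natDegree_sum_le_of_forall_le _ _ fun _ hk =>
    (natDegree_C_mul_X_pow_le _ _).trans (mem_range.1 hk).le

lemma eval_trigTaylor (x : ℝ) :
    (trigTaylor f t N).eval x = f (∑ k ∈ range N, ((t * x : ℝ) * Complex.I) ^ k / k !) := by
  simp only [trigTaylor, eval_finsetSum, eval_mul, eval_C, eval_pow, eval_X, map_sum]
  refine sum_congr rfl fun k _ => ?_
  have : ((t * x : ℝ) * Complex.I) ^ k / k ! = (x ^ k : ℝ) • ((t * Complex.I) ^ k / k !) := by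
    rw [Complex.real_smul]; push_cast; ring
  rw [this, map_smul, smul_eq_mul, mul_comm]

variable {f t N}

lemma abs_sub_eval_trigTaylor_le (hf : ∀ w, |f w| ≤ ‖w‖) {x : ℝ} (hx : |x| ≤ 1)
    (hN : 2 * |t| ≤ N + 1) :
    |f (Complex.exp ((t * x : ℝ) * Complex.I)) - (trigTaylor f t N).eval x| ≤
      2 * Real.exp (2 * |t|) / 2 ^ N := by
  rw [eval_trigTaylor, ← map_sub]
  refine (hf _).trans (Complex.norm_exp_sub_sum_range_le ?_ hN)
  rw [norm_mul, Complex.norm_I, mul_one, Complex.norm_real, Real.norm_eq_abs, abs_mul]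
  exact mul_le_of_le_one_right (abs_nonneg t) hx

end trigTaylor

lemma exists_trig_approx (f : ℂ →ₗ[ℝ] ℝ) (hf : ∀ w, |f w| ≤ ‖w‖) (t : ℝ) {ε : ℝ} (hε : 0 < ε)
    (hε1 : ε ≤ 1) :
    ∃ P : ℝ[X], (P.natDegree : ℝ) ≤ 4 * |t| + 2 * Real.log (1 / ε) + 4 ∧
      (∀ x ∈ Icc (-1 : ℝ) 1, |P.eval x| ≤ 1) ∧
      ∀ x ∈ Icc (-1 : ℝ) 1, |f (Complex.exp ((t * x : ℝ) * Complex.I)) - P.eval x| ≤ ε := by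
  set L := Real.log (1 / ε) with hL
  have hL0 : 0 ≤ L := Real.log_nonneg (by rw [le_div_iff₀ hε]; linarith)
  set M := ⌈4 * |t| + 2 * L⌉₊
  have hM : 4 * |t| + 2 * L ≤ M := Nat.le_ceil _
  have hM' : (M : ℝ) < 4 * |t| + 2 * L + 1 := Nat.ceil_lt_add_one (by positivity)
  have herr : 2 * Real.exp (2 * |t|) / 2 ^ (M + 3) ≤ ε / 4 := by
    have h := Real.exp_le_two_pow (a := 2 * |t| + L) (N := M) (by linarith)
    rw [Real.exp_add, hL, Real.exp_log (by positivity)] at h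
    rw [div_le_div_iff₀ (by positivity) (by norm_num), pow_add]
    have := mul_le_mul_of_nonneg_left h hε.le
    field_simp at this
    nlinarith
  obtain ⟨P, hPdeg, hP1, hPε⟩ := exists_abs_eval_le_one_of_approx (s := Icc (-1) 1)
    (g := fun x => f (Complex.exp ((t * x : ℝ) * Complex.I))) (Q := trigTaylor f t (M + 3))
    hε.le (by linarith)
    (fun x _ => (hf _).trans (by rw [Complex.norm_exp_ofReal_mul_I]))
    (fun x hx => (abs_sub_eval_trigTaylor_le hf (abs_le.2 hx) (by push_cast; linarith)).trans herr)
  refine ⟨P, ?_, hP1, hPε⟩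
  calc (P.natDegree : ℝ) ≤ (M + 3 : ℕ) := by
        exact_mod_cast hPdeg.trans (natDegree_trigTaylor_le f t _)
    _ ≤ 4 * |t| + 2 * L + 4 := by push_cast; linarith

lemma one_div_four_le_log_one_div {ε : ℝ} (hε : 0 < ε) (h : ε < 2 / Real.exp 1) :
    1 / 4 ≤ Real.log (1 / ε) := by
  have hlt : Real.exp 1 / 2 < 1 / ε := by
    rw [lt_div_iff₀ (Real.exp_pos 1)] at h
    rw [lt_div_iff₀ hε]; linarith
  calc 1 / 4 ≤ 1 - Real.log 2 := by linarith [Real.log_two_lt_d9]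
    _ = Real.log (Real.exp 1 / 2) := by rw [Real.log_div (by positivity) two_ne_zero, Real.log_exp]
    _ ≤ Real.log (1 / ε) := Real.log_le_log (by positivity) hlt.le

/-- (Polynomial approximations of trigonometric functions.) There is a
universal constant `C > 0` such that for every `t ∈ ℝ` and `ε ∈ (0, 2/e)` there are real
polynomials `P_cos`, `P_sin` of degree at most `C·(|t| + log(1/ε))`, bounded by 1 on
`[−1,1]`, and `ε`-approximating `cos(tx)` and `sin(tx)` respectively on `[−1,1]`. -/
theorem poly_approx_cos_sin :
    ∃ C : ℝ, 0 < C ∧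
      ∀ (t ε : ℝ), 0 < ε → ε < 2 / Real.exp 1 →
        ∃ Pc Ps : Polynomial ℝ,
          (Pc.natDegree : ℝ) ≤ C * (|t| + Real.log (1 / ε)) ∧
          (Ps.natDegree : ℝ) ≤ C * (|t| + Real.log (1 / ε)) ∧
          (∀ x ∈ Set.Icc (-1 : ℝ) 1, |Pc.eval x| ≤ 1) ∧
          (∀ x ∈ Set.Icc (-1 : ℝ) 1, |Ps.eval x| ≤ 1) ∧
          (∀ x ∈ Set.Icc (-1 : ℝ) 1, |Real.cos (t * x) - Pc.eval x| ≤ ε) ∧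
          (∀ x ∈ Set.Icc (-1 : ℝ) 1, |Real.sin (t * x) - Ps.eval x| ≤ ε) := by
  refine ⟨20, by norm_num, fun t ε hε hε2 => ?_⟩
  have hε1 : ε ≤ 1 := by
    rw [lt_div_iff₀ (Real.exp_pos 1)] at hε2
    nlinarith [Real.exp_one_gt_d9]
  have hL := one_div_four_le_log_one_div hε hε2
  obtain ⟨Pc, hPc_deg, hPc_one, hPc_cos⟩ :=
    exists_trig_approx Complex.reLm Complex.abs_re_le_norm t hε hε1
  obtain ⟨Ps, hPs_deg, hPs_one, hPs_sin⟩ :=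
    exists_trig_approx Complex.imLm Complex.abs_im_le_norm t hε hε1
  refine ⟨Pc, Ps, by linarith [abs_nonneg t], by linarith [abs_nonneg t], hPc_one, hPs_one,
    fun x hx => ?_, fun x hx => ?_⟩
  · simpa only [Complex.reLm_coe, Complex.exp_ofReal_mul_I_re] using hPc_cos x hx
  · simpa only [Complex.imLm_coe, Complex.exp_ofReal_mul_I_im] using hPs_sin x hx
end

section
/- Let T be an M×M unitary complex matrix and let Π be an M×M orthogonal projection (a Hermitian matrix with Π² = Π) such that H' := ΠTΠ is Hermitian. Define A := ((T† + I)/2)·Π. Then 2·A†A = Π + H', the operator norm of A is at most 1, and for every v ∈ ℂ^M with Πv = v and H'v = μv (μ ∈ ℝ), one has 2·A†A·v = (1 + μ)·v. -/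
open Matrix
open scoped Matrix.Norms.L2Operator

/-! Since `T T† = 1`, `(T + 1)(T† + 1) = 2 + T + T†`; compressing by `Π` and using
`ΠT†Π = (ΠTΠ)† = ΠTΠ` gives `4 A†A = 2 (Π + ΠTΠ)`. The norm bound
`‖A‖ ≤ ½ (‖T†‖ + 1) ‖Π‖ ≤ 1` holds in any C*-algebra, in particular for matrices with the
operator norm. -/

section StarRing

variable {R : Type*} [Ring R] [StarRing R]

theorem add_one_mul_star_add_one_of_mul_star_self {T : R} (hT : T * star T = 1) :
    (T + 1) * (star T + 1) = 2 + T + star T := by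
  rw [add_mul, mul_add, mul_add, hT, mul_one, one_mul, one_mul, ← one_add_one_eq_two]
  abel

theorem IsStarProjection.mul_star_mul_self {T P : R} (hP : IsStarProjection P)
    (hPTP : IsSelfAdjoint (P * T * P)) : P * star T * P = P * T * P := by
  simpa only [star_mul, hP.isSelfAdjoint.star_eq, mul_assoc] using hPTP.star_eq

theorem IsStarProjection.mul_add_one_mul_star_add_one_mul {T P : R} (hT : T * star T = 1)
    (hP : IsStarProjection P) (hPTP : IsSelfAdjoint (P * T * P)) :
    P * ((T + 1) * (star T + 1)) * P = 2 * (P + P * T * P) := by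
  rw [add_one_mul_star_add_one_of_mul_star_self hT, mul_add, mul_add, add_mul, add_mul,
    hP.mul_star_mul_self hPTP, mul_two, add_mul, hP.isIdempotentElem.eq, two_mul]
  abel

end StarRing

section Algebra

variable {E : Type*} [Ring E] [StarRing E] [Algebra ℂ E] [StarModule ℂ E]

noncomputable def gapAmplifier (T P : E) : E := ((2 : ℂ)⁻¹ • (star T + 1)) * P

theorem two_smul_star_gapAmplifier_mul_self {T P : E} (hT : T * star T = 1)
    (hP : IsStarProjection P) (hPTP : IsSelfAdjoint (P * T * P)) :
    (2 : ℂ) • (star (gapAmplifier T P) * gapAmplifier T P) = P + P * T * P := by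
  have hstar : star (gapAmplifier T P) = P * ((2 : ℂ)⁻¹ • (T + 1)) := by
    simp [gapAmplifier, star_mul, hP.isSelfAdjoint.star_eq, star_smul]
  calc (2 : ℂ) • (star (gapAmplifier T P) * gapAmplifier T P)
      = (2 * (2⁻¹ * 2⁻¹) : ℂ) • (P * ((T + 1) * (star T + 1)) * P) := by
        rw [hstar, gapAmplifier]
        simp only [smul_mul_assoc, mul_smul_comm, smul_smul, mul_assoc]
    _ = (2⁻¹ : ℂ) • (2 * (P + P * T * P)) := by
        rw [hP.mul_add_one_mul_star_add_one_mul hT hPTP]; norm_num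
    _ = P + P * T * P := by
        rw [two_mul, ← two_smul ℂ, smul_smul]; norm_num

end Algebra

section CStarRing

variable {E : Type*} [NormedRing E] [StarRing E] [CStarRing E]

theorem CStarRing.norm_le_one_of_star_mul_self_eq_one {U : E} (hU : star U * U = 1) :
    ‖U‖ ≤ 1 := by
  have hsq : ‖U‖ * ‖U‖ ≤ 1 := by
    rw [← CStarRing.norm_star_mul_self, hU]
    exact IsStarProjection.norm_le 1 (.one E)
  nlinarith [norm_nonneg U]

variable [NormedAlgebra ℂ E]

theorem norm_gapAmplifier_le_one {T P : E} (hT : T * star T = 1) (hP : IsStarProjection P) :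
    ‖gapAmplifier T P‖ ≤ 1 := by
  have hT' : ‖star T‖ ≤ 1 :=
    CStarRing.norm_le_one_of_star_mul_self_eq_one (by rwa [star_star])
  calc ‖gapAmplifier T P‖ ≤ ‖(2 : ℂ)⁻¹‖ * (‖star T‖ + ‖(1 : E)‖) * ‖P‖ := by
        grw [gapAmplifier, norm_mul_le, norm_smul_le, norm_add_le]
    _ ≤ 2⁻¹ * (1 + 1) * 1 := by
        gcongr
        · simp
        · exact IsStarProjection.norm_le 1 (.one E)
        · exact hP.norm_le
    _ = 1 := by norm_num

end CStarRing

theorem block_encoding_gap_amplifiable_general (M : ℕ) (T P : Matrix (Fin M) (Fin M) ℂ)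
    (hT2 : T * Tᴴ = 1)
    (hPherm : P.IsHermitian) (hPproj : P * P = P)
    (hH : (P * T * P).IsHermitian) :
    let A : Matrix (Fin M) (Fin M) ℂ := ((2 : ℂ)⁻¹ • (Tᴴ + 1)) * P
    ((2 : ℂ) • (Aᴴ * A) = P + P * T * P) ∧
    ‖LinearMap.toContinuousLinearMap (Matrix.toEuclideanLin A)‖ ≤ 1 ∧
    (∀ (v : Fin M → ℂ) (μ : ℝ), P *ᵥ v = v → (P * T * P) *ᵥ v = (μ : ℂ) • v →
      (2 : ℂ) • ((Aᴴ * A) *ᵥ v) = ((1 + μ : ℝ) : ℂ) • v) := by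
  intro A
  have hP : IsStarProjection P := ⟨hPproj, hPherm.isSelfAdjoint⟩
  have hA : (2 : ℂ) • (Aᴴ * A) = P + P * T * P :=
    two_smul_star_gapAmplifier_mul_self hT2 hP hH.isSelfAdjoint
  refine ⟨hA, norm_gapAmplifier_le_one hT2 hP, fun v μ hPv hHv => ?_⟩
  rw [← smul_mulVec, hA, add_mulVec, hPv, hHv]
  push_cast
  rw [add_smul, one_smul]

/-- Let `T` be an `M×M` unitary and `Π` an orthogonal projection such
that `H' = ΠTΠ` is Hermitian. With `A = ((Tᴴ + 1)/2)·Π`, one has `2AᴴA = Π + H'`, the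
operator norm of `A` is at most 1, and every `v` with `Πv = v` and `H'v = μv` (`μ ∈ ℝ`)
satisfies `2AᴴA v = (1+μ)v`. -/
theorem block_encoding_gap_amplifiable (M : ℕ) (T P : Matrix (Fin M) (Fin M) ℂ)
    (hT1 : Tᴴ * T = 1) (hT2 : T * Tᴴ = 1)
    (hPherm : P.IsHermitian) (hPproj : P * P = P)
    (hH : (P * T * P).IsHermitian) :
    let A : Matrix (Fin M) (Fin M) ℂ := ((2 : ℂ)⁻¹ • (Tᴴ + 1)) * P
    ((2 : ℂ) • (Aᴴ * A) = P + P * T * P) ∧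
    ‖LinearMap.toContinuousLinearMap (Matrix.toEuclideanLin A)‖ ≤ 1 ∧
    (∀ (v : Fin M → ℂ) (μ : ℝ), P *ᵥ v = v → (P * T * P) *ᵥ v = (μ : ℂ) • v →
      (2 : ℂ) • ((Aᴴ * A) *ᵥ v) = ((1 + μ : ℝ) : ℂ) • v) :=
  block_encoding_gap_amplifiable_general M T P hT2 hPherm hPproj hH
end

section
/- Let N ≥ 2 be an integer and x a fixed basis index. Then for all t ∈ ℝ, ⟨x| exp(−it·H_x) |s⟩ = (1+1/√N)/2 − e^{−2it/√N}·(1−1/√N)/2. Consequently, |⟨x| exp(−it·H_x) |s⟩|² ≥ sin²(t/√N) for all 0 ≤ t ≤ (π/2)√N, and exp(−i·(π/2)√N·H_x)|s⟩ = |x⟩. -/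
/-!
With `c = ⟨x|s⟩ = 1/√N`, the Hamiltonian `H_x` preserves the span of `|x⟩` and `|s⟩`:
`|x⟩ + |s⟩` is an eigenvector with eigenvalue `0` and `|x⟩ − |s⟩` one with eigenvalue `2c`.
Splitting `|s⟩ = ½((|x⟩ + |s⟩) − (|x⟩ − |s⟩))` gives
`exp(−itH_x)|s⟩ = ½((|x⟩ + |s⟩) − e^{−2itc}(|x⟩ − |s⟩))`, so the amplitude at `|x⟩` is the stated
one, its squared modulus is `sin²(tc) + c² cos²(tc)`, and at `tc = π/2` the state is `|x⟩`.
-/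

open Matrix

namespace Matrix

variable {n 𝕂 : Type*} [Fintype n] [DecidableEq n] [RCLike 𝕂]

theorem pow_mulVec_of_mulVec_eq_smul {A : Matrix n n 𝕂} {v : n → 𝕂} {μ : 𝕂}
    (h : A *ᵥ v = μ • v) (k : ℕ) : A ^ k *ᵥ v = μ ^ k • v := by
  induction k with
  | zero => simp
  | succ k ih => rw [pow_succ', ← mulVec_mulVec, ih, mulVec_smul, h, smul_smul, pow_succ]

open scoped Norms.Operator in
theorem exp_mulVec_of_mulVec_eq_smul {A : Matrix n n 𝕂} {v : n → 𝕂} {μ : 𝕂}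
    (h : A *ᵥ v = μ • v) : NormedSpace.exp A *ᵥ v = NormedSpace.exp μ • v := by
  have hA := (NormedSpace.exp_series_hasSum_exp' (𝕂 := 𝕂) A).map (mulVec.addMonoidHomLeft v)
    (continuous_id.matrix_mulVec continuous_const)
  refine hA.unique ?_
  convert (NormedSpace.exp_series_hasSum_exp' (𝕂 := 𝕂) μ).smul_const v using 1
  ext1 k
  change ((k.factorial⁻¹ : 𝕂) • A ^ k) *ᵥ v = _
  rw [smul_mulVec, pow_mulVec_of_mulVec_eq_smul h, smul_smul, smul_eq_mul]

end Matrix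

section GroverHamiltonian

variable {n : Type*} [Fintype n] [DecidableEq n]

def groverHamiltonian (u w : n → ℂ) (c : ℂ) : Matrix n n ℂ :=
  (1 + c) • 1 - vecMulVec u (star u) - vecMulVec w (star w)

variable {u w : n → ℂ} {c : ℂ}

theorem groverHamiltonian_mulVec_add (hu : star u ⬝ᵥ u = 1) (hw : star w ⬝ᵥ w = 1)
    (huw : star u ⬝ᵥ w = c) (hwu : star w ⬝ᵥ u = c) :
    groverHamiltonian u w c *ᵥ (u + w) = 0 := by
  simp only [groverHamiltonian, sub_mulVec, smul_mulVec, one_mulVec, vecMulVec_mulVec,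
    mulVec_add, hu, hw, huw, hwu, op_smul_eq_smul]
  module

theorem groverHamiltonian_mulVec_sub (hu : star u ⬝ᵥ u = 1) (hw : star w ⬝ᵥ w = 1)
    (huw : star u ⬝ᵥ w = c) (hwu : star w ⬝ᵥ u = c) :
    groverHamiltonian u w c *ᵥ (u - w) = (2 * c) • (u - w) := by
  simp only [groverHamiltonian, sub_mulVec, smul_mulVec, one_mulVec, vecMulVec_mulVec,
    mulVec_sub, hu, hw, huw, hwu, op_smul_eq_smul]
  module

theorem exp_smul_groverHamiltonian_mulVec (hu : star u ⬝ᵥ u = 1) (hw : star w ⬝ᵥ w = 1)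
    (huw : star u ⬝ᵥ w = c) (hwu : star w ⬝ᵥ u = c) (z : ℂ) :
    NormedSpace.exp (z • groverHamiltonian u w c) *ᵥ w =
      (2⁻¹ : ℂ) • ((u + w) - Complex.exp (z * (2 * c)) • (u - w)) := by
  have h_add : (z • groverHamiltonian u w c) *ᵥ (u + w) = (0 : ℂ) • (u + w) := by
    rw [smul_mulVec, groverHamiltonian_mulVec_add hu hw huw hwu, smul_zero, zero_smul]
  have h_sub : (z • groverHamiltonian u w c) *ᵥ (u - w) = (z * (2 * c)) • (u - w) := by
    rw [smul_mulVec, groverHamiltonian_mulVec_sub hu hw huw hwu, smul_smul]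
  calc NormedSpace.exp (z • groverHamiltonian u w c) *ᵥ w
      = NormedSpace.exp (z • groverHamiltonian u w c) *ᵥ ((2⁻¹ : ℂ) • ((u + w) - (u - w))) := by
        congr 1; module
    _ = _ := by
      rw [mulVec_smul, mulVec_sub, exp_mulVec_of_mulVec_eq_smul h_add,
        exp_mulVec_of_mulVec_eq_smul h_sub, ← Complex.exp_eq_exp_ℂ, Complex.exp_zero, one_smul]

theorem star_dotProduct_exp_smul_groverHamiltonian_mulVec (hu : star u ⬝ᵥ u = 1)
    (hw : star w ⬝ᵥ w = 1) (huw : star u ⬝ᵥ w = c) (hwu : star w ⬝ᵥ u = c) (z : ℂ) :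
    star u ⬝ᵥ (NormedSpace.exp (z • groverHamiltonian u w c) *ᵥ w) =
      (1 + c) / 2 - Complex.exp (z * (2 * c)) * ((1 - c) / 2) := by
  rw [exp_smul_groverHamiltonian_mulVec hu hw huw hwu]
  simp only [dotProduct_smul, dotProduct_add, dotProduct_sub, hu, huw, smul_eq_mul]
  ring

end GroverHamiltonian

theorem star_const_inv_sqrt_card_dotProduct_self (n : Type*) [Fintype n] [Nonempty n] :
    star (fun _ : n => ((Real.sqrt (Fintype.card n) : ℝ) : ℂ)⁻¹) ⬝ᵥ
      (fun _ => ((Real.sqrt (Fintype.card n) : ℝ) : ℂ)⁻¹) = 1 := by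
  simp only [dotProduct, Pi.star_apply, Finset.sum_const, Finset.card_univ, nsmul_eq_mul,
    ← Complex.ofReal_inv, Complex.star_def, Complex.conj_ofReal]
  rw [← Complex.ofReal_mul, ← mul_inv, Real.mul_self_sqrt (Nat.cast_nonneg _), Complex.ofReal_inv,
    Complex.ofReal_natCast, mul_inv_cancel₀ (Nat.cast_ne_zero.mpr Fintype.card_ne_zero)]

theorem norm_sq_grover_amplitude (c u : ℝ) :
    ‖(1 + (c : ℂ)) / 2 - Complex.exp (((-2 * u : ℝ) : ℂ) * Complex.I) * ((1 - c) / 2)‖ ^ 2 =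
      Real.sin u ^ 2 + c ^ 2 * Real.cos u ^ 2 := by
  rw [Complex.sq_norm, Complex.normSq_apply]
  simp only [Complex.sub_re, Complex.sub_im, Complex.add_re, Complex.add_im, Complex.mul_re,
    Complex.mul_im, Complex.div_ofNat_re, Complex.div_ofNat_im, Complex.one_re, Complex.one_im,
    Complex.ofReal_re, Complex.ofReal_im, Complex.exp_ofReal_mul_I_re, Complex.exp_ofReal_mul_I_im]
  rw [neg_mul, Real.cos_neg, Real.sin_neg, Real.cos_two_mul, Real.sin_two_mul]
  linear_combination ((1 - c) ^ 2 * Real.cos u ^ 2 - 1) * Real.sin_sq_add_cos_sq u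

theorem grover_time_evolution_general (N : ℕ) (x : Fin N) :
    let ketx : Fin N → ℂ := fun i => if i = x then 1 else 0
    let kets : Fin N → ℂ := fun _ => ((Real.sqrt N : ℝ) : ℂ)⁻¹
    let Hx : Matrix (Fin N) (Fin N) ℂ :=
      ((1 + (Real.sqrt N)⁻¹ : ℝ) : ℂ) • 1 -
        Matrix.vecMulVec ketx (star ketx) - Matrix.vecMulVec kets (star kets)
    (∀ t : ℝ,
      star ketx ⬝ᵥ ((NormedSpace.exp ((-Complex.I * (t : ℂ)) • Hx)) *ᵥ kets) =
        (((1 + (Real.sqrt N)⁻¹) / 2 : ℝ) : ℂ) -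
          Complex.exp (-2 * Complex.I * (t : ℂ) / ((Real.sqrt N : ℝ) : ℂ)) *
            (((1 - (Real.sqrt N)⁻¹) / 2 : ℝ) : ℂ)) ∧
    (∀ t : ℝ, 0 ≤ t → t ≤ Real.pi / 2 * Real.sqrt N →
      Real.sin (t / Real.sqrt N) ^ 2 ≤
        ‖star ketx ⬝ᵥ ((NormedSpace.exp ((-Complex.I * (t : ℂ)) • Hx)) *ᵥ kets)‖ ^ 2) ∧
    ((NormedSpace.exp
        ((-Complex.I * ((Real.pi / 2 * Real.sqrt N : ℝ) : ℂ)) • Hx)) *ᵥ kets = ketx) := by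
  intro ketx kets Hx
  have : Nonempty (Fin N) := ⟨x⟩
  have hxx : star ketx ⬝ᵥ ketx = 1 := by simp [ketx, dotProduct]
  have hss : star kets ⬝ᵥ kets = 1 := by
    simpa using star_const_inv_sqrt_card_dotProduct_self (Fin N)
  have hxs : star ketx ⬝ᵥ kets = ((Real.sqrt N : ℝ) : ℂ)⁻¹ := by simp [ketx, kets, dotProduct]
  have hsx : star kets ⬝ᵥ ketx = ((Real.sqrt N : ℝ) : ℂ)⁻¹ := by simp [ketx, kets, dotProduct]
  have hHx : Hx = groverHamiltonian ketx kets ((Real.sqrt N : ℝ) : ℂ)⁻¹ := by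
    simp [Hx, groverHamiltonian]
  rw [hHx]
  simp only [star_dotProduct_exp_smul_groverHamiltonian_mulVec hxx hss hxs hsx]
  refine ⟨fun t => ?_, fun t _ _ => ?_, ?_⟩
  · push_cast
    ring_nf
  · have harg : -Complex.I * t * (2 * ((Real.sqrt N : ℝ) : ℂ)⁻¹) =
        ((-2 * (t / Real.sqrt N) : ℝ) : ℂ) * Complex.I := by
      push_cast; ring
    rw [harg, ← Complex.ofReal_inv, norm_sq_grover_amplitude]
    exact le_add_of_nonneg_right (by positivity)
  · have hsqrt : (Real.sqrt N : ℂ) ≠ 0 := by simpa using x.pos.ne'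
    have harg : -Complex.I * ((Real.pi / 2 * Real.sqrt N : ℝ) : ℂ) *
        (2 * ((Real.sqrt N : ℝ) : ℂ)⁻¹) = -(Real.pi * Complex.I) := by
      push_cast; field_simp
    rw [exp_smul_groverHamiltonian_mulVec hxx hss hxs hsx, harg, Complex.exp_neg,
      Complex.exp_pi_mul_I]
    module

/-- Time evolution under the Grover Hamiltonian
`H_x = (1 + 1/√N)·I − |x⟩⟨x| − |s⟩⟨s|`:
`⟨x| exp(−it H_x) |s⟩ = (1+1/√N)/2 − e^{−2it/√N}(1−1/√N)/2`, hence
`|⟨x| exp(−it H_x) |s⟩|² ≥ sin²(t/√N)` for `0 ≤ t ≤ (π/2)√N`, and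
`exp(−i(π/2)√N·H_x)|s⟩ = |x⟩`. -/
theorem grover_time_evolution (N : ℕ) (hN : 2 ≤ N) (x : Fin N) :
    let ketx : Fin N → ℂ := fun i => if i = x then 1 else 0
    let kets : Fin N → ℂ := fun _ => ((Real.sqrt N : ℝ) : ℂ)⁻¹
    let Hx : Matrix (Fin N) (Fin N) ℂ :=
      ((1 + (Real.sqrt N)⁻¹ : ℝ) : ℂ) • 1 -
        Matrix.vecMulVec ketx (star ketx) - Matrix.vecMulVec kets (star kets)
    (∀ t : ℝ,
      star ketx ⬝ᵥ ((NormedSpace.exp ((-Complex.I * (t : ℂ)) • Hx)) *ᵥ kets) =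
        (((1 + (Real.sqrt N)⁻¹) / 2 : ℝ) : ℂ) -
          Complex.exp (-2 * Complex.I * (t : ℂ) / ((Real.sqrt N : ℝ) : ℂ)) *
            (((1 - (Real.sqrt N)⁻¹) / 2 : ℝ) : ℂ)) ∧
    (∀ t : ℝ, 0 ≤ t → t ≤ Real.pi / 2 * Real.sqrt N →
      Real.sin (t / Real.sqrt N) ^ 2 ≤
        ‖star ketx ⬝ᵥ ((NormedSpace.exp ((-Complex.I * (t : ℂ)) • Hx)) *ᵥ kets)‖ ^ 2) ∧
    ((NormedSpace.exp
        ((-Complex.I * ((Real.pi / 2 * Real.sqrt N : ℝ) : ℂ)) • Hx)) *ᵥ kets = ketx) :=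
  grover_time_evolution_general N x
end

section
/- Let G' ≥ 1 and let V_1, …, V_{G'} be N×N unitary complex matrices satisfying V_{G'}·V_{G'−1}·⋯·V_1 = I_N. Define the (N·G')×(N·G') unitary W = Σ_{x=0}^{G'−1} (V_x·V_{x−1}·⋯·V_1) ⊗ |x⟩⟨x| (with the empty product at x = 0 equal to I_N). Then W†·H·W = I_N ⊗ (2·I_{G'} − S − S†), where H is the periodic Feynman–Kitaev clock Hamiltonian for V_1,…,V_{G'} and S is the G'×G' cyclic shift matrix defined by S|x⟩ = |x−1 mod G'⟩. -/
open Matrix Kronecker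

/-- The partial product `V_x · V_{x−1} · ⋯ · V_1` (empty product at `x = 0`). -/
noncomputable def partialProd {N : ℕ} (V : ℕ → Matrix (Fin N) (Fin N) ℂ) :
    ℕ → Matrix (Fin N) (Fin N) ℂ
  | 0 => 1
  | x + 1 => V (x + 1) * partialProd V x

/-- The periodic Feynman–Kitaev clock Hamiltonian
`H = Σ_{x=1}^{G'} (−V_x ⊗ |x⟩⟨x−1| − V_xᴴ ⊗ |x−1⟩⟨x| + I ⊗ |x⟩⟨x| + I ⊗ |x−1⟩⟨x−1|)`,
with clock indices taken mod `G'`. -/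
noncomputable def clockHamiltonian (N G' : ℕ) [NeZero G']
    (V : ℕ → Matrix (Fin N) (Fin N) ℂ) :
    Matrix (Fin N × ZMod G') (Fin N × ZMod G') ℂ :=
  ∑ x ∈ Finset.Icc 1 G',
    (-(V x) ⊗ₖ Matrix.single ((x : ZMod G')) ((x : ZMod G') - 1) 1
      - (V x)ᴴ ⊗ₖ Matrix.single ((x : ZMod G') - 1) ((x : ZMod G')) 1
      + (1 : Matrix (Fin N) (Fin N) ℂ) ⊗ₖ
          Matrix.single ((x : ZMod G')) ((x : ZMod G')) 1
      + (1 : Matrix (Fin N) (Fin N) ℂ) ⊗ₖ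
          Matrix.single ((x : ZMod G') - 1) ((x : ZMod G') - 1) 1)

/-
The gauge transformation `W` is block diagonal in the clock basis with blocks `P x = V_x ⋯ V_1`,
so it conjugates the hopping term `V_{x+1} ⊗ |x+1⟩⟨x|` into `(P (x+1)ᴴ V_{x+1} P x) ⊗ |x+1⟩⟨x|`,
and `P (x+1) = V_{x+1} P x` together with unitarity of the `P x` turns the coefficient into `I`.
The condition `V_{G'} ⋯ V_1 = I` says that the same holds for the wrap-around edge `G'-1 → 0`.
Hence every term of `H` becomes `I` tensored with the Laplacian of one edge of the cycle on
`ZMod G'`, and these edge Laplacians sum to `2 I - S - Sᴴ`.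
-/

namespace Matrix

variable {l m n o : Type*} {α : Type*}

theorem kronecker_sum [NonUnitalNonAssocSemiring α] {ι : Type*} (s : Finset ι)
    (A : Matrix l m α) (B : ι → Matrix n o α) :
    A ⊗ₖ ∑ i ∈ s, B i = ∑ i ∈ s, A ⊗ₖ B i := by
  ext ⟨a, b⟩ ⟨c, d⟩
  simp [Matrix.sum_apply, Finset.mul_sum]

theorem sum_kronecker_single_eq_blockDiagonal [Semiring α] [Fintype o] [DecidableEq o]
    (A : o → Matrix m n α) :
    ∑ k, A k ⊗ₖ single k k (1 : α) = blockDiagonal A := by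
  ext ⟨a, b⟩ ⟨c, d⟩
  rcases eq_or_ne b d with rfl | h <;>
    simp [Matrix.sum_apply, blockDiagonal_apply, single_apply, ite_and, *]

theorem blockDiagonal_mul_kronecker_single [CommSemiring α] [Fintype m] [Fintype o]
    [DecidableEq o] (A : o → Matrix m m α) (M : Matrix m n α) (c d : o) :
    blockDiagonal A * (M ⊗ₖ single c d (1 : α)) = (A c * M) ⊗ₖ single c d 1 := by
  ext ⟨a, b⟩ ⟨e, f⟩
  rcases eq_or_ne c b with rfl | h
  · simp [mul_apply, blockDiagonal_apply, single_apply, Fintype.sum_prod_type, ite_and]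
  · simp [mul_apply, blockDiagonal_apply, single_apply, Fintype.sum_prod_type, ite_and, h,
      h.symm]

theorem kronecker_single_mul_blockDiagonal [CommSemiring α] [Fintype n] [Fintype o]
    [DecidableEq o] (A : o → Matrix n n α) (M : Matrix m n α) (c d : o) :
    (M ⊗ₖ single c d (1 : α)) * blockDiagonal A = (M * A d) ⊗ₖ single c d 1 := by
  ext ⟨a, b⟩ ⟨e, f⟩
  rcases eq_or_ne d f with rfl | h <;>
    simp [mul_apply, blockDiagonal_apply, single_apply, Fintype.sum_prod_type, ite_and, *]

theorem conjTranspose_blockDiagonal_mul_kronecker_single_mul [CommSemiring α] [StarRing α]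
    [Fintype m] [Fintype o] [DecidableEq o] (A : o → Matrix m m α) (M : Matrix m m α)
    (c d : o) :
    (blockDiagonal A)ᴴ * (M ⊗ₖ single c d (1 : α)) * blockDiagonal A =
      ((A c)ᴴ * M * A d) ⊗ₖ single c d 1 := by
  rw [blockDiagonal_conjTranspose, blockDiagonal_mul_kronecker_single,
    kronecker_single_mul_blockDiagonal]

end Matrix

theorem ZMod.sum_range_natCast {M : Type*} [AddCommMonoid M] (n : ℕ) [NeZero n]
    (f : ZMod n → M) : ∑ x ∈ Finset.range n, f x = ∑ k, f k :=
  Finset.sum_nbij' (↑) ZMod.val (by simp) (fun k _ => by simpa using k.val_lt)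
    (fun x hx => ZMod.val_cast_of_lt (Finset.mem_range.mp hx))
    (fun k _ => ZMod.natCast_zmod_val k) (fun _ _ => rfl)

section Cycle

variable {m ι α : Type*} [Fintype m] [DecidableEq m] [AddGroupWithOne ι] [Fintype ι]
  [DecidableEq ι] [CommRing α] [StarRing α]

def cycleEdgeLaplacian (k : ι) : Matrix ι ι α :=
  single (k + 1) (k + 1) 1 + single k k 1 - single (k + 1) k 1 - single k (k + 1) 1

def clockEdgeTerm (U : Matrix m m α) (k : ι) : Matrix (m × ι) (m × ι) α :=
  -(U ⊗ₖ single (k + 1) k 1) - Uᴴ ⊗ₖ single k (k + 1) 1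
    + 1 ⊗ₖ single (k + 1) (k + 1) 1 + 1 ⊗ₖ single k k 1

theorem sum_cycleEdgeLaplacian :
    ∑ k : ι, cycleEdgeLaplacian (α := α) k =
      (2 : α) • (1 : Matrix ι ι α) - Matrix.of (fun i j => if i = j - 1 then 1 else 0)
        - (Matrix.of fun i j => if i = j - 1 then 1 else 0)ᴴ := by
  ext i j
  simp [cycleEdgeLaplacian, Matrix.sum_apply, single_apply, one_apply, ite_and,
    ← eq_sub_iff_add_eq, apply_ite star, Finset.sum_add_distrib, eq_comm (a := j)]
  split_ifs <;> norm_num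

theorem conjTranspose_blockDiagonal_mul_clockEdgeTerm_mul (Q : ι → Matrix m m α)
    (hQ : ∀ k, (Q k)ᴴ * Q k = 1) {U : Matrix m m α} {k : ι} (hU : U * Q k = Q (k + 1)) :
    (blockDiagonal Q)ᴴ * clockEdgeTerm U k * blockDiagonal Q =
      1 ⊗ₖ cycleEdgeLaplacian k := by
  have hfwd : (Q (k + 1))ᴴ * U * Q k = 1 := by rw [mul_assoc, hU, hQ]
  have hbwd : (Q k)ᴴ * Uᴴ * Q (k + 1) = 1 := by
    simpa [mul_assoc] using congrArg conjTranspose hfwd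
  simp only [clockEdgeTerm, mul_add, add_mul, mul_sub, sub_mul, mul_neg, neg_mul,
    conjTranspose_blockDiagonal_mul_kronecker_single_mul, hfwd, hbwd, mul_one, hQ]
  ext ⟨a, b⟩ ⟨c, d⟩
  simp [cycleEdgeLaplacian]
  ring

end Cycle

theorem clockHamiltonian_eq_sum_clockEdgeTerm (N G' : ℕ) [NeZero G']
    (V : ℕ → Matrix (Fin N) (Fin N) ℂ) :
    clockHamiltonian N G' V =
      ∑ y ∈ Finset.range G', clockEdgeTerm (V (y + 1)) (y : ZMod G') := by
  rw [clockHamiltonian, ← Finset.Ico_add_one_right_eq_Icc, Finset.sum_Ico_eq_sum_range,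
    add_tsub_cancel_right]
  refine Finset.sum_congr rfl fun y _ => ?_
  rw [clockEdgeTerm, add_comm 1 y]
  push_cast
  rw [add_sub_cancel_right]

theorem partialProd_mem_unitaryGroup {N n : ℕ} {V : ℕ → Matrix (Fin N) (Fin N) ℂ}
    (hV : ∀ x, 1 ≤ x → x ≤ n → V x ∈ unitaryGroup (Fin N) ℂ) {x : ℕ} (hx : x ≤ n) :
    partialProd V x ∈ unitaryGroup (Fin N) ℂ := by
  induction x with
  | zero => exact one_mem _
  | succ x ih => exact mul_mem (hV _ x.succ_pos hx) (ih (by omega))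

theorem partialProd_val_natCast {N n : ℕ} [NeZero n] {V : ℕ → Matrix (Fin N) (Fin N) ℂ}
    (hprod : partialProd V n = 1) {x : ℕ} (hx : x ≤ n) :
    partialProd V (x : ZMod n).val = partialProd V x := by
  rcases hx.lt_or_eq with hx | rfl
  · rw [ZMod.val_cast_of_lt hx]
  · rw [ZMod.natCast_self, ZMod.val_zero, hprod, partialProd]

/-- If `V_1,…,V_{G'}` are `N×N` unitaries with `V_{G'}⋯V_1 = I` and
`W = Σ_{x=0}^{G'−1} (V_x⋯V_1) ⊗ |x⟩⟨x|`, then `Wᴴ H W = I ⊗ (2I − S − Sᴴ)`, where `H` is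
the periodic Feynman–Kitaev clock Hamiltonian and `S` is the cyclic shift
`S|x⟩ = |x−1⟩`. -/
theorem clock_hamiltonian_conjugation (N G' : ℕ) [NeZero G']
    (V : ℕ → Matrix (Fin N) (Fin N) ℂ)
    (hunit : ∀ x, 1 ≤ x → x ≤ G' → (V x)ᴴ * V x = 1 ∧ V x * (V x)ᴴ = 1)
    (hprod : partialProd V G' = 1) :
    let W : Matrix (Fin N × ZMod G') (Fin N × ZMod G') ℂ :=
      ∑ x ∈ Finset.range G',
        (partialProd V x) ⊗ₖ Matrix.single ((x : ZMod G')) ((x : ZMod G')) 1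
    let S : Matrix (ZMod G') (ZMod G') ℂ :=
      Matrix.of fun i j => if i = j - 1 then 1 else 0
    Wᴴ * clockHamiltonian N G' V * W =
      (1 : Matrix (Fin N) (Fin N) ℂ) ⊗ₖ
        ((2 : ℂ) • (1 : Matrix (ZMod G') (ZMod G') ℂ) - S - Sᴴ) := by
  intro W S
  set Q : ZMod G' → Matrix (Fin N) (Fin N) ℂ := fun k => partialProd V k.val
  have hQ : ∀ k, (Q k)ᴴ * Q k = 1 := fun k => Unitary.star_mul_self_of_mem
    (partialProd_mem_unitaryGroup (fun x h1 h2 => Unitary.mem_iff.mpr (hunit x h1 h2))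
      k.val_lt.le)
  have hstep : ∀ y ∈ Finset.range G', V (y + 1) * Q y = Q (y + 1) := by
    intro y hy
    have hy := Finset.mem_range.mp hy
    simp only [Q]
    rw [← Nat.cast_succ, partialProd_val_natCast hprod hy, partialProd_val_natCast hprod hy.le]
    rfl
  have hW : W = blockDiagonal Q := by
    rw [← sum_kronecker_single_eq_blockDiagonal,
      ← ZMod.sum_range_natCast G' (fun k => Q k ⊗ₖ single k k 1)]
    refine Finset.sum_congr rfl fun x hx => ?_
    simp only [Q]
    rw [partialProd_val_natCast hprod (Finset.mem_range.mp hx).le]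
  calc Wᴴ * clockHamiltonian N G' V * W
      = ∑ y ∈ Finset.range G',
          (blockDiagonal Q)ᴴ * clockEdgeTerm (V (y + 1)) (y : ZMod G') * blockDiagonal Q := by
        rw [hW, clockHamiltonian_eq_sum_clockEdgeTerm, Finset.mul_sum, Finset.sum_mul]
    _ = ∑ y ∈ Finset.range G', 1 ⊗ₖ cycleEdgeLaplacian (y : ZMod G') :=
        Finset.sum_congr rfl fun y hy =>
          conjTranspose_blockDiagonal_mul_clockEdgeTerm_mul Q hQ (hstep y hy)
    _ = 1 ⊗ₖ ∑ k, cycleEdgeLaplacian k := by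
        rw [ZMod.sum_range_natCast G' (fun k => 1 ⊗ₖ cycleEdgeLaplacian k), kronecker_sum]
    _ = _ := by rw [sum_cycleEdgeLaplacian]
end

section
/- Let G' ≥ 1, let V_1, …, V_{G'} be N×N unitary complex matrices, and let h_0 ∈ ℂ^N be a unit vector with V_{G'}·V_{G'−1}·⋯·V_1·h_0 = h_0. Define h_j = V_j·V_{j−1}·⋯·V_1·h_0 for j = 0,…,G'−1 and, for each k ∈ {0,…,G'−1}, define φ_k = (1/√G')·Σ_{j=0}^{G'−1} e^{2πijk/G'}·(h_j ⊗ |j⟩). Then each φ_k is a unit vector, the vectors φ_0,…,φ_{G'−1} are pairwise orthogonal, and H·φ_k = 2(1 − cos(2πk/G'))·φ_k, where H is the periodic Feynman–Kitaev clock Hamiltonian for V_1,…,V_{G'}. -/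
/-!
Put `h_c = V_c ⋯ V_1 h₀` for `c ∈ ℤ/G'`. The cyclicity `V_{G'} ⋯ V_1 h₀ = h₀` makes
`h_{c+1} = V_{c+1} h_c` hold all the way round the cycle, and unitarity makes every `h_c`
a unit vector. Hence on history states `Σ_c a_c (h_c ⊗ |c⟩)` the clock Hamiltonian acts on
the amplitudes as the Laplacian `a_c ↦ 2a_c − a_{c−1} − a_{c+1}` of the cycle, and the `h_c`
drop out of inner products. The `φ_k` are the history states whose amplitudes are the
normalised characters `c ↦ e^{2πick/G'}/√G'` of `ℤ/G'`: orthonormality is orthogonality of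
characters, and the eigenvalue is `2 − e^{2πik/G'} − e^{−2πik/G'} = 2(1 − cos(2πk/G'))`.
-/

open Matrix Kronecker

open Finset

theorem kronecker_single_one_mulVec_apply {R m n : Type*} [CommSemiring R] [Fintype m]
    [Fintype n] [DecidableEq n] (A : Matrix m m R) (a b : n) (v : m × n → R) (i : m) (c : n) :
    ((A ⊗ₖ single a b (1 : R)) *ᵥ v) (i, c) =
      if c = a then (A *ᵥ fun i' => v (i', b)) i else 0 := by
  split_ifs with h
  · subst h
    simp [mulVec, dotProduct, Fintype.sum_prod_type, single_apply]
  · simp [mulVec, dotProduct, Ne.symm h]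

theorem sum_Icc_one_eq_sum_zmod {n : ℕ} [NeZero n] {M : Type*} [AddCommMonoid M] (f : ℕ → M) :
    ∑ x ∈ Icc 1 n, f x = ∑ c : ZMod n, f (c.val + 1) := by
  refine (sum_nbij' (fun c => c.val + 1) (fun x => ((x - 1 : ℕ) : ZMod n)) ?_ ?_ ?_ ?_ ?_).symm
  · intro c _
    simpa using (ZMod.val_lt c)
  · simp
  · simp
  · intro x hx
    simp only [mem_Icc] at hx
    simp [ZMod.val_natCast, Nat.mod_eq_of_lt (show x - 1 < n by omega)]
    omega
  · simp

theorem star_mulVec_dotProduct_mulVec_of_conjTranspose_mul_self {R n : Type*} [CommSemiring R]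
    [StarRing R] [Fintype n] [DecidableEq n] {A : Matrix n n R} (hA : Aᴴ * A = 1) (v : n → R) :
    star (A *ᵥ v) ⬝ᵥ (A *ᵥ v) = star v ⬝ᵥ v := by
  rw [star_mulVec, dotProduct_mulVec, vecMul_vecMul, hA, vecMul_one]

theorem ofReal_sum_norm_sq {n : Type*} [Fintype n] (v : n → ℂ) :
    ((∑ i, ‖v i‖ ^ 2 : ℝ) : ℂ) = star v ⬝ᵥ v := by
  push_cast
  exact sum_congr rfl fun i _ => (Complex.conj_mul' (v i)).symm

/-- The vector `Σ_t a_t (h_t ⊗ |t⟩)`. -/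
def historyState {ι m : Type*} (a : ι → ℂ) (h : ι → m → ℂ) : m × ι → ℂ :=
  fun p => a p.2 * h p.2 p.1

theorem smul_historyState {ι m : Type*} (s : ℂ) (a : ι → ℂ) (h : ι → m → ℂ) :
    s • historyState a h = historyState (s • a) h := by
  ext p
  simp [historyState, mul_assoc]

theorem star_historyState_dotProduct {ι m : Type*} [Fintype ι] [Fintype m] {h : ι → m → ℂ}
    (hnorm : ∀ t, star (h t) ⬝ᵥ h t = 1) (a b : ι → ℂ) :
    star (historyState a h) ⬝ᵥ historyState b h = ∑ t, star (a t) * b t := by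
  simp only [dotProduct, Fintype.sum_prod_type_right]
  refine sum_congr rfl fun t _ => ?_
  simp only [historyState, Pi.star_apply, star_mul']
  calc ∑ i, star (a t) * star (h t i) * (b t * h t i)
      = star (a t) * b t * (star (h t) ⬝ᵥ h t) := by
        rw [dotProduct, mul_sum]
        exact sum_congr rfl fun i _ => by simp only [Pi.star_apply]; ring
    _ = star (a t) * b t := by rw [hnorm, mul_one]

theorem sum_range_smul_indicator_eq_historyState {m : Type*} {n : ℕ} [NeZero n] (a : ℕ → ℂ)
    (w : ℕ → m → ℂ) :
    ∑ j ∈ range n,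
        a j • (fun p : m × ZMod n => w j p.1 * if p.2 = (j : ZMod n) then 1 else 0) =
      historyState (fun c => a c.val) (fun c => w c.val) := by
  ext ⟨i, c⟩
  rw [Finset.sum_apply, sum_eq_single c.val]
  · simp [historyState]
  · intro j hj hjc
    have : c ≠ (j : ZMod n) := by
      rintro rfl
      exact hjc (ZMod.val_cast_of_lt (mem_range.1 hj)).symm
    simp [this]
  · simp [ZMod.val_lt]

section ClockHamiltonian

variable {N G' : ℕ} [NeZero G'] {V : ℕ → Matrix (Fin N) (Fin N) ℂ}

theorem partialProd_succ (j : ℕ) : partialProd V (j + 1) = V (j + 1) * partialProd V j := rfl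

theorem conjTranspose_partialProd_mul_self {j : ℕ}
    (hunit : ∀ x, 1 ≤ x → x ≤ j → (V x)ᴴ * V x = 1) :
    (partialProd V j)ᴴ * partialProd V j = 1 := by
  induction j with
  | zero => simp [partialProd]
  | succ j ih =>
    rw [partialProd_succ, conjTranspose_mul, Matrix.mul_assoc, ← Matrix.mul_assoc (V (j + 1))ᴴ,
      hunit (j + 1) le_add_self le_rfl, Matrix.one_mul, ih fun x hx hxj => hunit x hx (by omega)]

theorem clockHamiltonian_mulVec_apply (ψ : Fin N × ZMod G' → ℂ) (i : Fin N) (c : ZMod G') :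
    (clockHamiltonian N G' V *ᵥ ψ) (i, c) =
      2 * ψ (i, c) - (V ((c - 1).val + 1) *ᵥ fun i' => ψ (i', c - 1)) i
        - ((V (c.val + 1))ᴴ *ᵥ fun i' => ψ (i', c + 1)) i := by
  simp only [clockHamiltonian, sum_mulVec, Finset.sum_apply, sum_Icc_one_eq_sum_zmod,
    Nat.cast_add, Nat.cast_one, ZMod.natCast_zmod_val, add_sub_cancel_right, add_mulVec,
    sub_mulVec, neg_mulVec, Pi.add_apply, Pi.sub_apply, Pi.neg_apply,
    kronecker_single_one_mulVec_apply, one_mulVec]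
  simp only [sum_add_distrib, sum_sub_distrib, sum_neg_distrib, ← sub_eq_iff_eq_add, sum_ite_eq,
    mem_univ, if_true, sub_add_cancel]
  ring

theorem partialProd_val_add_one_mulVec {h0 : Fin N → ℂ} (hfix : partialProd V G' *ᵥ h0 = h0)
    (c : ZMod G') :
    partialProd V (c + 1).val *ᵥ h0 = V (c.val + 1) *ᵥ (partialProd V c.val *ᵥ h0) := by
  rw [mulVec_mulVec, ← partialProd_succ]
  have hval : (c + 1).val = (c.val + 1) % G' := by
    rw [ZMod.val_add, ZMod.val_one_eq_one_mod, Nat.add_mod_mod]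
  rcases (show c.val + 1 ≤ G' from ZMod.val_lt c).lt_or_eq with hlt | heq
  · rw [hval, Nat.mod_eq_of_lt hlt]
  · rw [hval, heq, Nat.mod_self, hfix, partialProd, one_mulVec]

theorem clockHamiltonian_mulVec_historyState {h : ZMod G' → Fin N → ℂ}
    (hstep : ∀ c, h (c + 1) = V (c.val + 1) *ᵥ h c)
    (hunit : ∀ c : ZMod G', (V (c.val + 1))ᴴ * V (c.val + 1) = 1) (a : ZMod G' → ℂ) :
    clockHamiltonian N G' V *ᵥ historyState a h =
      historyState (fun c => 2 * a c - a (c - 1) - a (c + 1)) h := by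
  ext ⟨i, c⟩
  have hcol : ∀ c', (fun i' => historyState a h (i', c')) = a c' • h c' := fun _ => rfl
  rw [clockHamiltonian_mulVec_apply, hcol, hcol, mulVec_smul, mulVec_smul, ← hstep,
    sub_add_cancel, hstep, mulVec_mulVec, hunit, one_mulVec]
  simp only [historyState, Pi.smul_apply, smul_eq_mul]
  ring

end ClockHamiltonian

section FourierAmplitude

open Real Complex ComplexConjugate

noncomputable def fourierAmplitude (G' : ℕ) [NeZero G'] (k : ℕ) (c : ZMod G') : ℂ :=
  ((√G' : ℝ) : ℂ)⁻¹ * ZMod.stdAddChar (c * (k : ZMod G'))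

variable {G' : ℕ} [NeZero G']

theorem fourierAmplitude_apply (k : ℕ) (c : ZMod G') :
    fourierAmplitude G' k c =
      ((√G' : ℝ) : ℂ)⁻¹ * exp (2 * π * I * (c.val : ℂ) * (k : ℂ) / G') := by
  rw [fourierAmplitude, ZMod.stdAddChar_apply, ← ZMod.natCast_zmod_val c, ← Nat.cast_mul,
    ZMod.toCircle_natCast, ZMod.natCast_zmod_val]
  push_cast
  ring_nf

theorem sum_star_fourierAmplitude_mul (k k' : ℕ) :
    ∑ c, star (fourierAmplitude G' k c) * fourierAmplitude G' k' c =
      if (k : ZMod G') = k' then 1 else 0 := by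
  have hs : conj (((√G' : ℝ) : ℂ)⁻¹) * ((√G' : ℝ) : ℂ)⁻¹ = (G' : ℂ)⁻¹ := by
    rw [map_inv₀, conj_ofReal, ← mul_inv, ← ofReal_mul, mul_self_sqrt (Nat.cast_nonneg G'),
      ofReal_natCast]
  have hterm : ∀ c : ZMod G', star (fourierAmplitude G' k c) * fourierAmplitude G' k' c =
      (G' : ℂ)⁻¹ * ZMod.stdAddChar (c * ((k' : ZMod G') - (k : ZMod G'))) := by
    intro c
    rw [fourierAmplitude, fourierAmplitude, star_mul', Complex.star_def,
      ← AddChar.map_neg_eq_conj, mul_sub, sub_eq_neg_add, AddChar.map_add_eq_mul, ← hs]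
    ring
  simp_rw [hterm, ← mul_sum, AddChar.sum_mulShift _ (ZMod.isPrimitive_stdAddChar G'),
    sub_eq_zero, eq_comm (a := (k' : ZMod G'))]
  split_ifs
  · simp [ZMod.card]
  · simp

theorem two_mul_fourierAmplitude_sub (k : ℕ) (c : ZMod G') :
    2 * fourierAmplitude G' k c - fourierAmplitude G' k (c - 1) - fourierAmplitude G' k (c + 1) =
      ((2 * (1 - Real.cos (2 * π * k / G')) : ℝ) : ℂ) * fourierAmplitude G' k c := by
  have hcos : ((2 * Real.cos (2 * π * k / G') : ℝ) : ℂ) =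
      ZMod.stdAddChar (k : ZMod G') + ZMod.stdAddChar (-(k : ZMod G')) := by
    rw [← Int.cast_natCast (R := ZMod G') k, ← Int.cast_neg, ZMod.stdAddChar_coe,
      ZMod.stdAddChar_coe]
    push_cast
    rw [two_cos]
    ring_nf
  simp only [fourierAmplitude, sub_mul, add_mul, one_mul, sub_eq_add_neg (c * _),
    AddChar.map_add_eq_mul]
  push_cast at hcos ⊢
  linear_combination ((√G' : ℝ) : ℂ)⁻¹ * ZMod.stdAddChar (c * (k : ZMod G')) * hcos

end FourierAmplitude

/-- Let `V_1,…,V_{G'}` be `N×N` unitaries and `h_0` a unit vector with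
`V_{G'}⋯V_1 h_0 = h_0`. With `h_j = V_j⋯V_1 h_0` and
`φ_k = (1/√G') Σ_j e^{2πijk/G'} (h_j ⊗ |j⟩)` for `k = 0,…,G'−1`, each `φ_k` is a unit
vector, they are pairwise orthogonal, and `H φ_k = 2(1 − cos(2πk/G')) φ_k`, where `H` is
the periodic Feynman–Kitaev clock Hamiltonian. -/
theorem clock_hamiltonian_eigenvectors (N G' : ℕ) [NeZero G']
    (V : ℕ → Matrix (Fin N) (Fin N) ℂ)
    (hunit : ∀ x, 1 ≤ x → x ≤ G' → (V x)ᴴ * V x = 1 ∧ V x * (V x)ᴴ = 1)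
    (h0 : Fin N → ℂ) (h0unit : ∑ i, ‖h0 i‖ ^ 2 = 1)
    (hfix : partialProd V G' *ᵥ h0 = h0) :
    let φ : ℕ → (Fin N × ZMod G') → ℂ := fun k =>
      ((Real.sqrt G' : ℝ) : ℂ)⁻¹ •
        ∑ j ∈ Finset.range G',
          Complex.exp (2 * Real.pi * Complex.I * (j : ℂ) * (k : ℂ) / (G' : ℂ)) •
            (fun p : Fin N × ZMod G' =>
              (partialProd V j *ᵥ h0) p.1 * (if p.2 = (j : ZMod G') then 1 else 0))
    (∀ k < G', ∑ p, ‖φ k p‖ ^ 2 = 1) ∧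
    (∀ k < G', ∀ k' < G', k ≠ k' → star (φ k) ⬝ᵥ φ k' = 0) ∧
    (∀ k < G', clockHamiltonian N G' V *ᵥ φ k =
      ((2 * (1 - Real.cos (2 * Real.pi * k / G')) : ℝ) : ℂ) • φ k) := by
  intro φ
  set h : ZMod G' → Fin N → ℂ := fun c => partialProd V c.val *ᵥ h0
  have hV (c : ZMod G') : (V (c.val + 1))ᴴ * V (c.val + 1) = 1 :=
    (hunit _ le_add_self (ZMod.val_lt c)).1
  have hnorm (c : ZMod G') : star (h c) ⬝ᵥ h c = 1 := by
    have hP : (partialProd V c.val)ᴴ * partialProd V c.val = 1 :=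
      conjTranspose_partialProd_mul_self fun x hx hxc =>
        (hunit x hx (hxc.trans (ZMod.val_lt c).le)).1
    rw [star_mulVec_dotProduct_mulVec_of_conjTranspose_mul_self hP, ← ofReal_sum_norm_sq, h0unit,
      Complex.ofReal_one]
  have hφ (k : ℕ) : φ k = historyState (fourierAmplitude G' k) h := by
    simp only [φ, sum_range_smul_indicator_eq_historyState, smul_historyState]
    congr 1
    ext c
    rw [fourierAmplitude_apply, Pi.smul_apply, smul_eq_mul]
  refine ⟨fun k _ => ?_, fun k hk k' hk' hne => ?_, fun k _ => ?_⟩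
  · rw [← Complex.ofReal_inj, ofReal_sum_norm_sq, hφ, star_historyState_dotProduct hnorm,
      sum_star_fourierAmplitude_mul, if_pos rfl, Complex.ofReal_one]
  · rw [hφ, hφ, star_historyState_dotProduct hnorm, sum_star_fourierAmplitude_mul,
      if_neg (by rwa [ZMod.natCast_eq_natCast_iff', Nat.mod_eq_of_lt hk, Nat.mod_eq_of_lt hk'])]
  · rw [hφ, clockHamiltonian_mulVec_historyState (partialProd_val_add_one_mulVec hfix) hV,
      smul_historyState]
    congr 1
    ext c
    exact two_mul_fourierAmplitude_sub k c
end
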